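/- arXiv:1007.1220 — 4 statements merged into one kernel-verified Lean document; each statement's English description precedes it below -/
import Mathlib

section
/- Let H be the orthocentre of triangle ABC and Σ any circle through H. If lines AH, BH, CH meet Σ again at X, Y, Z respectively, then triangle XYZ is indirectly similar to triangle ABC (Hagge's theorem). -/
open EuclideanGeometry Real Complex RealInnerProductSpace
open ComplexConjugate

/-!
For `p = P - H`, the second intersection of the line `PH` with a circle of centre `O` through `H`
is `O - conj (H - O) * (p / conj p)`: it is the reflection of `H` in the diameter perpendicular
to `PH`. So it suffices that `p ↦ p / conj p` agrees on `A - H`, `B - H`, `C - H` with some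
`p ↦ λ * conj p + μ`, `λ ≠ 0`. After clearing denominators this is a polynomial consequence of the
two orthogonality relations `AH ⊥ BC` and `BH ⊥ CA`.
-/

theorem Complex.inner_eq_zero_iff_conj_mul_add_mul_conj (z w : ℂ) :
    inner ℝ z w = 0 ↔ conj z * w + z * conj w = 0 := by
  rw [Complex.inner, ← Complex.ofReal_inj, Complex.re_eq_add_conj, map_mul, conj_conj,
    mul_comm (conj w), mul_comm w, Complex.ofReal_zero, div_eq_zero_iff]
  simp only [OfNat.ofNat_ne_zero, or_false]

theorem exists_mul_add_eq_of_sub_mul_sub_eq {K : Type*} [Field K] {p₁ p₂ p₃ q₁ q₂ q₃ : K}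
    (hp : p₁ ≠ p₂) (hq : q₁ ≠ q₂) (h : (q₁ - q₃) * (p₁ - p₂) = (q₁ - q₂) * (p₁ - p₃)) :
    ∃ α β : K, α ≠ 0 ∧ α * p₁ + β = q₁ ∧ α * p₂ + β = q₂ ∧ α * p₃ + β = q₃ := by
  have hp' : p₁ - p₂ ≠ 0 := sub_ne_zero.2 hp
  set α := (q₁ - q₂) / (p₁ - p₂)
  have hα : α * (p₁ - p₂) = q₁ - q₂ := div_mul_cancel₀ _ hp'
  refine ⟨α, q₁ - α * p₁, div_ne_zero (sub_ne_zero.2 hq) hp', by ring, ?_, ?_⟩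
  · linear_combination -hα
  · have : α * (p₁ - p₃) * (p₁ - p₂) = (q₁ - q₃) * (p₁ - p₂) := by
      linear_combination (p₁ - p₃) * hα - h
    linear_combination -mul_right_cancel₀ hp' this

theorem ne_of_mem_affineSpan_pair_of_ne {k V Pt : Type*} [Ring k] [AddCommGroup V] [Module k V]
    [AddTorsor V Pt] {P H Q : Pt} (hQP : Q ∈ line[k, P, H]) (hQH : Q ≠ H) : P ≠ H := by
  rintro rfl
  rw [Set.pair_eq_singleton, AffineSubspace.mem_affineSpan_singleton] at hQP
  exact hQH hQP

theorem sub_center_eq_of_mem_sphere_of_mem_affineSpan_pair {O H P Q : ℂ} {r : ℝ}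
    (hH : H ∈ Metric.sphere O r) (hQ : Q ∈ Metric.sphere O r)
    (hQP : Q ∈ line[ℝ, P, H]) (hQH : Q ≠ H) :
    Q - O = -conj (H - O) * ((P - H) / conj (P - H)) := by
  obtain ⟨u, hu⟩ : ∃ u : ℝ, u • (P - H) = Q - H := by
    rwa [← vsub_vadd Q H, vadd_right_mem_affineSpan_pair] at hQP
  rw [Complex.real_smul] at hu
  have hu₀ : (u : ℂ) ≠ 0 := by
    rintro h
    rw [h, zero_mul, eq_comm, sub_eq_zero] at hu
    exact hQH hu
  have hp : conj (P - H) ≠ 0 :=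
    (map_ne_zero _).2 (sub_ne_zero.2 (ne_of_mem_affineSpan_pair_of_ne hQP hQH))
  have hsq : (Q - O) * conj (Q - O) = (H - O) * conj (H - O) := by
    rw [Complex.mul_conj, Complex.mul_conj, Complex.normSq_eq_norm_sq,
      Complex.normSq_eq_norm_sq, ← Complex.dist_eq, ← Complex.dist_eq,
      Metric.mem_sphere.1 hH, Metric.mem_sphere.1 hQ]
  have hQc : u * conj (P - H) = conj (Q - H) := by rw [← hu, map_mul, Complex.conj_ofReal]
  have hchord :
      u * (P - H) * conj (P - H) = -((H - O) * conj (P - H) + conj (H - O) * (P - H)) := by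
    refine mul_left_cancel₀ hu₀ ?_
    simp only [map_sub] at hsq hQc ⊢
    linear_combination hsq + (u * (P - H) + (H - O)) * hQc + (conj Q - conj O) * hu
  rw [mul_div_assoc', eq_div_iff hp]
  linear_combination hchord - conj (P - H) * hu

theorem div_conj_ne_div_conj_of_inner_eq_zero {a b c : ℂ}
    (h₁ : inner ℝ a (b - c) = 0) (h₂ : inner ℝ b (c - a) = 0)
    (ha : a ≠ 0) (hb : b ≠ 0) (hab : a ≠ b) :
    a / conj a ≠ b / conj b := by
  have R₁ := (Complex.inner_eq_zero_iff_conj_mul_add_mul_conj _ _).1 h₁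
  have R₂ := (Complex.inner_eq_zero_iff_conj_mul_add_mul_conj _ _).1 h₂
  simp only [map_sub] at R₁ R₂
  rw [Ne, div_eq_div_iff ((map_ne_zero _).2 ha) ((map_ne_zero _).2 hb)]
  -- `h` puts the orthocentre on `AB`, which forces a right angle at `B`, i.e. `b = 0`.
  intro h
  have : conj a ^ 2 * b * (b - a) = 0 := by
    linear_combination (a * (conj a - conj b + conj c) / 2 - b * conj a) * h
      + (a * conj b / 2) * R₁ + (a * conj a / 2) * R₂
  simp [ha, hb, sub_eq_zero, hab.symm] at this

theorem div_conj_sub_div_conj_mul_eq_of_inner_eq_zero {a b c : ℂ}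
    (h₁ : inner ℝ a (b - c) = 0) (h₂ : inner ℝ b (c - a) = 0)
    (ha : a ≠ 0) (hb : b ≠ 0) (hc : c ≠ 0) :
    (a / conj a - c / conj c) * (conj a - conj b) =
      (a / conj a - b / conj b) * (conj a - conj c) := by
  have R₁ := (Complex.inner_eq_zero_iff_conj_mul_add_mul_conj _ _).1 h₁
  have R₂ := (Complex.inner_eq_zero_iff_conj_mul_add_mul_conj _ _).1 h₂
  simp only [map_sub] at R₁ R₂
  have hx : conj a ≠ 0 := (map_ne_zero _).2 ha
  have hy : conj b ≠ 0 := (map_ne_zero _).2 hb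
  have hz : conj c ≠ 0 := (map_ne_zero _).2 hc
  field_simp
  linear_combination conj b * (conj a - conj c) * R₁ + conj a * (conj b - conj c) * R₂

/-- Hagge's theorem: if lines AH, BH, CH through the orthocentre H meet a circle
Σ through H again at X, Y, Z, then XYZ is indirectly similar to ABC. -/
theorem hagge_circle_indirect_similarity (A B C H X Y Z O : ℂ) (r : ℝ)
    (hnd : AffineIndependent ℝ ![A, B, C])
    (hH1 : inner ℝ (H - A) (B - C) = (0 : ℝ)) (hH2 : inner ℝ (H - B) (C - A) = (0 : ℝ))
    (hr : 0 < r) (hHSig : H ∈ Metric.sphere O r)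
    (hXSig : X ∈ Metric.sphere O r) (hYSig : Y ∈ Metric.sphere O r)
    (hZSig : Z ∈ Metric.sphere O r)
    (hX : X ∈ affineSpan ℝ ({A, H} : Set ℂ)) (hXne : X ≠ H)
    (hY : Y ∈ affineSpan ℝ ({B, H} : Set ℂ)) (hYne : Y ≠ H)
    (hZ : Z ∈ affineSpan ℝ ({C, H} : Set ℂ)) (hZne : Z ≠ H) :
    ∃ α β : ℂ, α ≠ 0 ∧
      α * (starRingEnd ℂ) A + β = X ∧
      α * (starRingEnd ℂ) B + β = Y ∧
      α * (starRingEnd ℂ) C + β = Z := by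
  have hA := sub_ne_zero.2 (ne_of_mem_affineSpan_pair_of_ne hX hXne)
  have hB := sub_ne_zero.2 (ne_of_mem_affineSpan_pair_of_ne hY hYne)
  have hC := sub_ne_zero.2 (ne_of_mem_affineSpan_pair_of_ne hZ hZne)
  have hAB : A ≠ B := hnd.injective.ne (by decide : (0 : Fin 3) ≠ 1)
  have h₁ : inner ℝ (A - H) ((B - H) - (C - H)) = 0 := by
    rw [sub_sub_sub_cancel_right, ← neg_sub, inner_neg_left, hH1, neg_zero]
  have h₂ : inner ℝ (B - H) ((C - H) - (A - H)) = 0 := by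
    rw [sub_sub_sub_cancel_right, ← neg_sub, inner_neg_left, hH2, neg_zero]
  have hw : -conj (H - O) ≠ 0 := neg_ne_zero.2 <| (map_ne_zero _).2 <| sub_ne_zero.2 <| by
    rintro rfl
    exact hr.ne (by simpa using hHSig)
  have eX := sub_center_eq_of_mem_sphere_of_mem_affineSpan_pair hHSig hXSig hX hXne
  have eY := sub_center_eq_of_mem_sphere_of_mem_affineSpan_pair hHSig hYSig hY hYne
  have eZ := sub_center_eq_of_mem_sphere_of_mem_affineSpan_pair hHSig hZSig hZ hZne
  have hne := div_conj_ne_div_conj_of_inner_eq_zero h₁ h₂ hA hB (sub_left_injective.ne hAB)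
  have hcross := div_conj_sub_div_conj_mul_eq_of_inner_eq_zero h₁ h₂ hA hB hC
  apply exists_mul_add_eq_of_sub_mul_sub_eq ((starRingEnd ℂ).injective.ne hAB)
  · rintro rfl
    rw [eY] at eX
    exact hne (mul_left_cancel₀ hw eX).symm
  · simp only [map_sub] at hcross eX eY eZ ⊢
    linear_combination (conj A - conj B) * (eX - eZ) - (conj A - conj C) * (eX - eY)
      - (conj H - conj O) * hcross
end

section
/- If an orientation-reversing similarity f maps triangle ABC to triangle XYZ, then for each pair of corresponding sides (e.g. BC and YZ) the internal and external bisector directions of the angle between the lines BC and YZ are parallel to the two axes of f, which are the same for all pairs of corresponding sides. -/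
/-!
For `f z = α * conj z + β` one has `(u - v) * (f u - f v) = |u - v|² α`, so for every side the
product of its direction with the direction of its image is a positive multiple of `α`: the
bisector directions are those of the square roots of `±α`, whatever the side. Since `|α| ≠ 1`,
`f` has a fixed point `p`, and `f (p + s w) = p + s α (conj w)`, so the line `p + ℝ w` is
invariant exactly when `α (conj w)` is a real multiple of `w`, i.e. (multiplying by `w`) when
`w²` is a real multiple of `α`.
-/

open Complex ComplexConjugate

namespace Complex

variable (α β : ℂ)

theorem sub_mul_sub_conj_affine (u v : ℂ) :
    (u - v) * ((α * conj u + β) - (α * conj v + β)) = (normSq (u - v) : ℂ) * α := by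
  rw [← mul_conj, map_sub]
  ring

theorem exists_pos_sub_mul_sub_conj_affine {u v : ℂ} (huv : u ≠ v) :
    ∃ t : ℝ, 0 < t ∧ (u - v) * ((α * conj u + β) - (α * conj v + β)) = (t : ℂ) * α :=
  ⟨normSq (u - v), normSq_pos.mpr (sub_ne_zero.mpr huv), sub_mul_sub_conj_affine α β u v⟩

theorem exists_conj_affine_fixed {α : ℂ} (hk : ‖α‖ ≠ 1) :
    ∃ p : ℂ, α * conj p + β = p := by
  have hden : (1 : ℂ) - normSq α ≠ 0 := by
    rw [sub_ne_zero, ne_comm, normSq_eq_norm_sq]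
    exact_mod_cast (pow_eq_one_iff_of_nonneg (norm_nonneg α) two_ne_zero).not.mpr hk
  -- substituting `conj p = conj α * p + conj β` into `p = α * conj p + β`
  refine ⟨(β + α * conj β) / (1 - normSq α), ?_⟩
  have hconj : conj ((1 : ℂ) - normSq α) = 1 - normSq α := by
    rw [map_sub, map_one, conj_ofReal]
  rw [map_div₀, map_add, map_mul, conj_conj, hconj]
  field_simp
  linear_combination β * mul_conj α

theorem conj_affine_add_ofReal_mul_of_fixed {p : ℂ} (hp : α * conj p + β = p) (w : ℂ) (s : ℝ) :
    α * conj (p + (s : ℂ) * w) + β = p + (s : ℂ) * (α * conj w) := by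
  rw [map_add, map_mul, conj_ofReal]
  linear_combination hp

theorem forall_exists_add_ofReal_mul_iff (p z w : ℂ) :
    (∀ s : ℝ, ∃ s' : ℝ, p + (s : ℂ) * z = p + (s' : ℂ) * w) ↔ ∃ r : ℝ, z = (r : ℂ) * w := by
  constructor
  · intro h
    obtain ⟨r, hr⟩ := h 1
    exact ⟨r, by simpa using hr⟩
  · rintro ⟨r, rfl⟩ s
    exact ⟨s * r, by push_cast; ring⟩

theorem exists_real_mul_conj_iff_sq {α w : ℂ} (hα : α ≠ 0) (hw : w ≠ 0) :
    (∃ r : ℝ, α * conj w = (r : ℂ) * w) ↔ ∃ t : ℝ, t ≠ 0 ∧ w ^ 2 = (t : ℂ) * α := by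
  have hmul : α * conj w * w = (normSq w : ℂ) * α := by
    rw [← mul_conj, mul_comm w]
    ring
  constructor
  · rintro ⟨r, hr⟩
    have hr0 : (r : ℂ) ≠ 0 := by
      rintro h
      rw [h, zero_mul, mul_eq_zero, map_eq_zero] at hr
      exact hr.elim hα hw
    refine ⟨normSq w / r, div_ne_zero (normSq_pos.mpr hw).ne' (ofReal_ne_zero.mp hr0), ?_⟩
    rw [ofReal_div]
    field_simp
    linear_combination hmul - w * hr
  · rintro ⟨t, ht, hwt⟩
    have ht0 : (t : ℂ) ≠ 0 := ofReal_ne_zero.mpr ht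
    refine ⟨normSq w / t, ?_⟩
    rw [ofReal_div]
    field_simp
    refine mul_right_cancel₀ hw ?_
    linear_combination (t : ℂ) * hmul - (normSq w : ℂ) * hwt

end Complex

/-- If an orientation-reversing similarity f(z) = α·conj z + β maps A↦X, B↦Y, C↦Z,
then for each pair of corresponding sides the product of direction vectors is a
positive real multiple of α (hence the bisector directions of corresponding sides
agree for all pairs), and a line through the fixed point p with direction w is
invariant under f iff w² is a nonzero real multiple of α : the axes of f. -/
theorem axes_of_indirect_similarity (α β A B C X Y Z : ℂ)
    (hα : α ≠ 0) (hk : ‖α‖ ≠ 1)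
    (hnd : AffineIndependent ℝ ![A, B, C])
    (hX : α * (starRingEnd ℂ) A + β = X)
    (hY : α * (starRingEnd ℂ) B + β = Y)
    (hZ : α * (starRingEnd ℂ) C + β = Z) :
    (∃ t : ℝ, 0 < t ∧ (C - B) * (Z - Y) = (t : ℂ) * α) ∧
    (∃ t : ℝ, 0 < t ∧ (A - C) * (X - Z) = (t : ℂ) * α) ∧
    (∃ t : ℝ, 0 < t ∧ (B - A) * (Y - X) = (t : ℂ) * α) ∧
    ∃ p : ℂ, α * (starRingEnd ℂ) p + β = p ∧
      ∀ w : ℂ, w ≠ 0 →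
        ((∀ s : ℝ, ∃ s' : ℝ, α * (starRingEnd ℂ) (p + (s : ℂ) * w) + β
            = p + (s' : ℂ) * w) ↔ ∃ t : ℝ, t ≠ 0 ∧ w ^ 2 = (t : ℂ) * α) := by
  have hinj := hnd.injective
  have hCB : C ≠ B := by simpa using hinj.ne (by decide : (2 : Fin 3) ≠ 1)
  have hAC : A ≠ C := by simpa using hinj.ne (by decide : (0 : Fin 3) ≠ 2)
  have hBA : B ≠ A := by simpa using hinj.ne (by decide : (1 : Fin 3) ≠ 0)
  subst hX hY hZ
  refine ⟨exists_pos_sub_mul_sub_conj_affine α β hCB, exists_pos_sub_mul_sub_conj_affine α β hAC,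
    exists_pos_sub_mul_sub_conj_affine α β hBA, ?_⟩
  obtain ⟨p, hp⟩ := exists_conj_affine_fixed β hk
  refine ⟨p, hp, fun w hw => ?_⟩
  simp only [conj_affine_add_ofReal_mul_of_fixed α β hp]
  rw [forall_exists_add_ofReal_mul_iff, exists_real_mul_conj_iff_sq hα hw]
end

section
/- Let bH be the second intersection of the median line BG with the orthocentroidal circle of triangle ABC, and let Σ be any circle through bH. If lines A·bH, B·bH, C·bH meet Σ again at Z, Y, X respectively, then triangle XYZ is directly similar to triangle ABC. -/
/-!
Put `a = A - B` and `c = C - B`. As `bH` is the foot of the perpendicular from `H` to the median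
from `B`, and `⟪a + c, H - B⟫ = 2⟪a, c⟫` for the orthocentre, `bH` is pinned down by
`(bH - B) * conj (a + c) = conj a * c + a * conj c`. This makes `A - bH`, `B - bH`, `C - bH`
explicit, and their "squared directions" `u / conj u` are `conj a / a * ρ`,
`(a + c) / conj (a + c)` and `conj c / c * ρ` for a common `ρ`; a direct computation shows that
the triangle formed by the values at `C, B, A` is directly similar to `ABC`. Finally, the line
through a point `p` of a circle with centre `O` in direction `d` meets the circle again at
`O - conj (p - O) * (d / conj d)`, so `X, Y, Z` are the images of these three values under a
single map `z ↦ κ * z + O` with `κ ≠ 0`.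
-/

open ComplexConjugate
open scoped RealInnerProductSpace

section InnerProductSpace

variable {E : Type*} [NormedAddCommGroup E] [InnerProductSpace ℝ E]

theorem inner_median_sub_orthocenter {A B C H : E} (h₁ : ⟪H - A, B - C⟫ = 0)
    (h₂ : ⟪H - B, C - A⟫ = 0) :
    ⟪A - B + (C - B), H - B⟫ = 2 * ⟪A - B, C - B⟫ := by
  rw [show H - A = (H - B) - (A - B) by abel, show B - C = -(C - B) by abel] at h₁
  rw [show C - A = (C - B) - (A - B) by abel] at h₂
  generalize A - B = a, C - B = c, H - B = h at h₁ h₂ ⊢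
  simp only [inner_sub_left, inner_sub_right, inner_neg_right, inner_add_left] at h₁ h₂ ⊢
  rw [real_inner_comm h a, real_inner_comm h c]
  linarith

theorem exists_eq_smul_median_of_inner_eq_zero {A B C G H P : E}
    (hG : G = (3 : ℝ)⁻¹ • (A + B + C)) (h₁ : ⟪H - A, B - C⟫ = 0)
    (h₂ : ⟪H - B, C - A⟫ = 0) (hP : P ∈ line[ℝ, B, G]) (hPGH : ⟪P - G, P - H⟫ = 0)
    (hPG : P ≠ G) :
    ∃ t : ℝ, P - B = t • (A - B + (C - B)) ∧
      t * ‖A - B + (C - B)‖ ^ 2 = 2 * ⟪A - B, C - B⟫ := by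
  obtain ⟨r, hPr⟩ := mem_affineSpan_pair_iff_exists_lineMap_eq.mp hP
  rw [AffineMap.lineMap_apply_module'] at hPr
  set s := A - B + (C - B)
  have hGB : G - B = (3 : ℝ)⁻¹ • s := by rw [hG]; module
  have hr : r - 1 ≠ 0 := fun hr ↦
    hPG (by rw [← hPr, sub_eq_zero.mp hr, one_smul, sub_add_cancel])
  have hPB : P - B = (r / 3) • s := by
    rw [← hPr, add_sub_cancel_right, hGB, smul_smul, div_eq_mul_inv]
  have hPG' : P - G = ((r - 1) / 3) • s := by
    rw [show P - G = (P - B) - (G - B) by abel, hPB, hGB]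
    module
  have hsPH : ⟪s, P - H⟫ = 0 := by
    rw [hPG', real_inner_smul_left] at hPGH
    exact (mul_eq_zero.mp hPGH).resolve_left (div_ne_zero hr three_ne_zero)
  refine ⟨r / 3, hPB, ?_⟩
  calc r / 3 * ‖s‖ ^ 2 = ⟪s, P - B⟫ := by
        rw [hPB, real_inner_smul_right, real_inner_self_eq_norm_sq]
    _ = ⟪s, P - H⟫ + ⟪s, H - B⟫ := by rw [← inner_add_right, sub_add_sub_cancel]
    _ = 2 * ⟪A - B, C - B⟫ := by rw [hsPH, zero_add, inner_median_sub_orthocenter h₁ h₂]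

end InnerProductSpace

namespace Complex

def DirectlySimilar (A B C X Y Z : ℂ) : Prop :=
  ∃ γ δ : ℂ, γ ≠ 0 ∧ γ * A + δ = X ∧ γ * B + δ = Y ∧ γ * C + δ = Z

namespace DirectlySimilar

theorem of_mul_eq {A B C X Y Z : ℂ} (hAB : A ≠ B) (hXY : X ≠ Y)
    (h : (Y - X) * (C - A) = (B - A) * (Z - X)) : DirectlySimilar A B C X Y Z := by
  have hBA : B - A ≠ 0 := sub_ne_zero.mpr hAB.symm
  refine ⟨(Y - X) / (B - A), X - (Y - X) / (B - A) * A,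
    div_ne_zero (sub_ne_zero.mpr hXY.symm) hBA, by ring, ?_, ?_⟩
  · field_simp
    ring
  · field_simp
    linear_combination h

theorem mul_add {A B C X Y Z : ℂ} (h : DirectlySimilar A B C X Y Z) {κ : ℂ} (hκ : κ ≠ 0)
    (δ : ℂ) : DirectlySimilar A B C (κ * X + δ) (κ * Y + δ) (κ * Z + δ) := by
  obtain ⟨γ, ε, hγ, rfl, rfl, rfl⟩ := h
  exact ⟨κ * γ, κ * ε + δ, mul_ne_zero hκ hγ, by ring, by ring, by ring⟩

end DirectlySimilar

theorem conj_sub_mul_sub_ne_of_affineIndependent {A B C : ℂ}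
    (h : AffineIndependent ℝ ![A, B, C]) : conj (A - B) * (C - B) ≠ (A - B) * conj (C - B) := by
  rw [affineIndependent_iff_not_collinear_set] at h
  intro hreal
  rcases eq_or_ne A B with rfl | hAB
  · exact h (by simpa using collinear_pair ℝ A C)
  have ha : conj (A - B) ≠ 0 := (map_ne_zero _).mpr (sub_ne_zero.mpr hAB)
  have hre : ((conj (A - B) * (C - B)).re : ℂ) = conj (A - B) * (C - B) := by
    rw [← conj_eq_iff_re, map_mul, conj_conj, hreal, mul_comm]
  have hC : C ∈ line[ℝ, B, A] := by
    refine mem_affineSpan_pair_iff_exists_lineMap_eq.mpr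
      ⟨(conj (A - B) * (C - B)).re / normSq (A - B), ?_⟩
    rw [AffineMap.lineMap_apply_module', real_smul, ofReal_div, hre, normSq_eq_conj_mul_self]
    field_simp
    ring
  have hCBA := collinear_insert_of_mem_affineSpan_pair hC
  rw [Set.pair_comm, Set.insert_comm, Set.pair_comm] at hCBA
  exact h hCBA

theorem eq_of_mem_sphere_of_mem_line {O P p q : ℂ} {r : ℝ} (hp : p ∈ Metric.sphere O r)
    (hq : q ∈ Metric.sphere O r) (hqP : q ∈ line[ℝ, P, p]) (hqp : q ≠ p) :
    q = -conj (p - O) * ((P - p) / conj (P - p)) + O := by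
  rw [Set.pair_comm] at hqP
  obtain ⟨u, rfl⟩ := mem_affineSpan_pair_iff_exists_lineMap_eq.mp hqP
  rw [AffineMap.lineMap_apply_module', real_smul] at hq hqp ⊢
  have hu : (u : ℂ) ≠ 0 := fun hu ↦ hqp (by simp [hu])
  have hd : conj (P - p) ≠ 0 := (map_ne_zero _).mpr fun hd ↦ hqp (by simp [hd])
  have hsphere : (u * (P - p) + (p - O)) * conj (u * (P - p) + (p - O))
      = (p - O) * conj (p - O) := by
    rw [mul_conj', mul_conj', ← add_sub_assoc, ← dist_eq, ← dist_eq,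
      Metric.mem_sphere.mp hp, Metric.mem_sphere.mp hq]
  have hchord : (p - O) * conj (P - p) + conj (p - O) * (P - p)
      + u * ((P - p) * conj (P - p)) = 0 := by
    simp only [map_add, map_mul, conj_ofReal] at hsphere
    refine (mul_eq_zero.mp ?_).resolve_left hu
    linear_combination hsphere
  field_simp
  linear_combination hchord

theorem mul_conj_eq_of_eq_smul {a c v : ℂ} {t : ℝ} (hv : v = t • (a + c))
    (ht : t * ‖a + c‖ ^ 2 = 2 * ⟪a, c⟫) :
    v * (conj a + conj c) = conj a * c + a * conj c := by
  have h2 : conj a * c + a * conj c = ((2 * ⟪a, c⟫ : ℝ) : ℂ) := by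
    rw [Complex.inner, ← add_conj, map_mul, conj_conj]
    ring
  rw [h2, ← ht, hv, real_smul, ← map_add, mul_assoc, mul_conj']
  push_cast
  ring

theorem sub_div_conj_sub_of_mul_conj_eq {a c p : ℂ}
    (hp : p * (conj a + conj c) = conj a * c + a * conj c) (ha : a ≠ 0) (hac : a - c ≠ 0)
    (hs : a + c ≠ 0) :
    (a - p) / conj (a - p)
      = conj a / a * ((a - c) / (conj a - conj c) * ((a + c) / (conj a + conj c))) := by
  have hs' : conj a + conj c ≠ 0 := by rw [← map_add]; exact (map_ne_zero _).mpr hs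
  have hac' : conj a - conj c ≠ 0 := by rw [← map_sub]; exact (map_ne_zero _).mpr hac
  have hA : a - p = conj a * (a - c) / (conj a + conj c) := by
    rw [eq_div_iff hs']
    linear_combination -hp
  rw [hA]
  simp only [map_div₀, map_mul, map_add, map_sub, conj_conj]
  field_simp

theorem div_conj_of_mul_conj_eq {a c p : ℂ}
    (hp : p * (conj a + conj c) = conj a * c + a * conj c) (hp0 : p ≠ 0) (hs : a + c ≠ 0) :
    p / conj p = (a + c) / (conj a + conj c) := by
  have hs' : conj a + conj c ≠ 0 := by rw [← map_add]; exact (map_ne_zero _).mpr hs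
  have hpc := congrArg conj hp
  simp only [map_add, map_mul, conj_conj] at hpc
  rw [div_eq_div_iff ((map_ne_zero _).mpr hp0) hs']
  linear_combination hp - hpc

theorem directlySimilar_div_conj_sub {A B C P : ℂ}
    (hABC : conj (A - B) * (C - B) ≠ (A - B) * conj (C - B))
    (hp : (P - B) * (conj (A - B) + conj (C - B))
      = conj (A - B) * (C - B) + (A - B) * conj (C - B)) (hPB : P ≠ B) :
    DirectlySimilar A B C ((C - P) / conj (C - P)) ((B - P) / conj (B - P))
      ((A - P) / conj (A - P)) := by
  obtain ⟨a, rfl⟩ : ∃ a, A = a + B := ⟨A - B, by ring⟩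
  obtain ⟨c, rfl⟩ : ∃ c, C = c + B := ⟨C - B, by ring⟩
  obtain ⟨p, rfl⟩ : ∃ p, P = p + B := ⟨P - B, by ring⟩
  simp only [add_sub_cancel_right, add_sub_add_right_eq_sub, sub_add_cancel_right,
    add_ne_right] at *
  have ha : a ≠ 0 := by rintro rfl; simp at hABC
  have hc : c ≠ 0 := by rintro rfl; simp at hABC
  have hac : a - c ≠ 0 := fun h ↦ hABC (by rw [sub_eq_zero.mp h, mul_comm])
  have hs : a + c ≠ 0 := fun h ↦ hABC (by
    rw [eq_neg_of_add_eq_zero_right h]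
    simp only [mul_neg, map_neg, neg_inj]
    ring)
  have hfA := sub_div_conj_sub_of_mul_conj_eq hp ha hac hs
  have hfC := sub_div_conj_sub_of_mul_conj_eq (a := c) (c := a) (p := p)
    (by linear_combination hp) hc (by rwa [← neg_sub, neg_ne_zero]) (by rwa [add_comm])
  rw [← neg_sub a c, ← neg_sub (conj a), neg_div_neg_eq, add_comm c, add_comm (conj c)] at hfC
  have hfB : -p / conj (-p) = (a + c) / (conj a + conj c) := by
    rw [map_neg, neg_div_neg_eq]
    exact div_conj_of_mul_conj_eq hp hPB hs
  have hac' : conj a - conj c ≠ 0 := by rw [← map_sub]; exact (map_ne_zero _).mpr hac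
  have hs' : conj a + conj c ≠ 0 := by rw [← map_add]; exact (map_ne_zero _).mpr hs
  rw [hfA, hfB, hfC]
  refine DirectlySimilar.of_mul_eq (by simpa using ha) (fun h ↦ hABC ?_) ?_
  · field_simp at h
    linear_combination -h
  · field_simp
    ring

end Complex

theorem bH_circle_direct_similarity_general (A B C G H bH X Y Z O : ℂ) (r : ℝ)
    (hnd : AffineIndependent ℝ ![A, B, C])
    (hG : G = (3 : ℝ)⁻¹ • (A + B + C))
    (hH1 : inner ℝ (H - A) (B - C) = (0 : ℝ)) (hH2 : inner ℝ (H - B) (C - A) = (0 : ℝ))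
    (hline : bH ∈ affineSpan ℝ ({B, G} : Set ℂ))
    (hcirc : inner ℝ (bH - G) (bH - H) = (0 : ℝ))
    (hne : bH ≠ G)
    (hbH : bH ∈ Metric.sphere O r)
    (hZmem : Z ∈ Metric.sphere O r) (hZ : Z ∈ affineSpan ℝ ({A, bH} : Set ℂ)) (hZne : Z ≠ bH)
    (hYmem : Y ∈ Metric.sphere O r) (hY : Y ∈ affineSpan ℝ ({B, bH} : Set ℂ)) (hYne : Y ≠ bH)
    (hXmem : X ∈ Metric.sphere O r) (hX : X ∈ affineSpan ℝ ({C, bH} : Set ℂ)) (hXne : X ≠ bH) :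
    ∃ γ δ : ℂ, γ ≠ 0 ∧ γ * A + δ = X ∧ γ * B + δ = Y ∧ γ * C + δ = Z := by
  obtain ⟨t, hbHt, ht⟩ := exists_eq_smul_median_of_inner_eq_zero hG hH1 hH2 hline hcirc hne
  have hbHB : bH ≠ B := fun h ↦ hYne (by simpa [h] using hY)
  have hsim := Complex.directlySimilar_div_conj_sub
    (Complex.conj_sub_mul_sub_ne_of_affineIndependent hnd)
    (Complex.mul_conj_eq_of_eq_smul hbHt ht) hbHB
  have hκ : -conj (bH - O) ≠ 0 := by
    rw [neg_ne_zero, map_ne_zero, sub_ne_zero]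
    rintro rfl
    rw [Metric.mem_sphere, dist_self] at hbH
    exact hXne (by simpa [← hbH] using hXmem)
  rw [Complex.eq_of_mem_sphere_of_mem_line hbH hXmem hX hXne,
    Complex.eq_of_mem_sphere_of_mem_line hbH hYmem hY hYne,
    Complex.eq_of_mem_sphere_of_mem_line hbH hZmem hZ hZne]
  exact hsim.mul_add hκ O

/-- bH circle theorem: let bH be the second intersection of line BG with the
orthocentroidal circle; if lines A·bH, B·bH, C·bH meet a circle Σ through bH
again at Z, Y, X, then XYZ is directly similar to ABC. -/
theorem bH_circle_direct_similarity (A B C G H bH X Y Z O : ℂ) (r : ℝ)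
    (hnd : AffineIndependent ℝ ![A, B, C])
    (hG : G = (3 : ℝ)⁻¹ • (A + B + C))
    (hH1 : inner ℝ (H - A) (B - C) = (0 : ℝ)) (hH2 : inner ℝ (H - B) (C - A) = (0 : ℝ))
    (hGH : G ≠ H)
    (hline : bH ∈ affineSpan ℝ ({B, G} : Set ℂ))
    (hcirc : inner ℝ (bH - G) (bH - H) = (0 : ℝ))
    (hne : bH ≠ G)
    (hr : 0 < r) (hbH : bH ∈ Metric.sphere O r)
    (hZmem : Z ∈ Metric.sphere O r) (hZ : Z ∈ affineSpan ℝ ({A, bH} : Set ℂ)) (hZne : Z ≠ bH)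
    (hYmem : Y ∈ Metric.sphere O r) (hY : Y ∈ affineSpan ℝ ({B, bH} : Set ℂ)) (hYne : Y ≠ bH)
    (hXmem : X ∈ Metric.sphere O r) (hX : X ∈ affineSpan ℝ ({C, bH} : Set ℂ)) (hXne : X ≠ bH) :
    ∃ γ δ : ℂ, γ ≠ 0 ∧ γ * A + δ = X ∧ γ * B + δ = Y ∧ γ * C + δ = Z :=
  bH_circle_direct_similarity_general A B C G H bH X Y Z O r hnd hG hH1 hH2 hline hcirc hne hbH
    hZmem hZ hZne hYmem hY hYne hXmem hX hXne
end

section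
/- Let Σ be a circle meeting the circumcircle of triangle ABC at a point J, and let X, Y, Z be points of Σ. Define A′, B′, C′ as the second intersections of lines JX, JY, JZ with the circumcircle. Then triangle A′B′C′ is directly similar to triangle XYZ. -/
/-!
If `c` is the centre of a circle through `J`, every point `P` of the circle satisfies the chord
relation `(P - c) * conj (P - J) = -(conj (J - c) * (P - J))`. Writing it for `X` on `Σ` (centre
`O'`) and for `A'` on `Γ₀` (centre `O`), whose chords from `J` have the same direction, gives
`A' - O = conj (J - O) / conj (J - O') * (X - O')`: projecting from `J` is the restriction to `Σ`
of one fixed spiral similarity carrying `Σ` onto `Γ₀`.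
-/

open ComplexConjugate Metric

lemma ne_center_of_mem_sphere {M : Type*} [MetricSpace M] {c p q : M} {r : ℝ}
    (hp : p ∈ sphere c r) (hq : q ∈ sphere c r) (hqp : q ≠ p) : p ≠ c := by
  rintro rfl
  rw [mem_sphere, dist_self] at hp
  rw [mem_sphere, ← hp, dist_eq_zero] at hq
  exact hqp hq

lemma Complex.sub_mul_conj_sub_eq_of_norm_eq {c J P : ℂ} (h : ‖P - c‖ = ‖J - c‖) :
    (P - c) * conj (P - J) = -(conj (J - c) * (P - J)) := by
  have hsq : (P - c) * conj (P - c) = (J - c) * conj (J - c) := by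
    rw [Complex.mul_conj', Complex.mul_conj', h]
  simp only [map_sub] at hsq ⊢
  linear_combination hsq

lemma Complex.eq_center_add_of_mem_sphere_of_mem_line {O O' J X P : ℂ} {r r' : ℝ}
    (hJ : J ∈ sphere O r) (hJ' : J ∈ sphere O' r') (hX : X ∈ sphere O' r') (hXJ : X ≠ J)
    (hP : P ∈ sphere O r) (hPline : P ∈ line[ℝ, J, X]) (hPJ : P ≠ J) :
    P = O + conj (J - O) / conj (J - O') * (X - O') := by
  obtain ⟨t, rfl⟩ := mem_affineSpan_pair_iff_exists_lineMap_eq.mp hPline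
  rw [AffineMap.lineMap_apply_module'] at hP hPJ ⊢
  rw [mem_sphere_iff_norm] at hJ hJ' hX hP
  have hchordX := Complex.sub_mul_conj_sub_eq_of_norm_eq (hX.trans hJ'.symm)
  have hchordP := Complex.sub_mul_conj_sub_eq_of_norm_eq (hP.trans hJ.symm)
  simp only [add_sub_cancel_right, Complex.real_smul, map_mul, Complex.conj_ofReal] at hchordP
  have ht : (t : ℂ) ≠ 0 := by
    rintro ht
    simp [ht] at hPJ
  have hw : conj (X - J) ≠ 0 := by rwa [map_ne_zero, sub_ne_zero]
  have hv : conj (J - O') ≠ 0 := by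
    rw [map_ne_zero, sub_ne_zero]
    exact ne_center_of_mem_sphere (mem_sphere_iff_norm.mpr hJ') (mem_sphere_iff_norm.mpr hX) hXJ
  rw [← sub_eq_iff_eq_add', Complex.real_smul, div_mul_eq_mul_div, eq_div_iff hv]
  refine mul_right_cancel₀ (mul_ne_zero ht hw) ?_
  linear_combination conj (J - O') * hchordP - conj (J - O) * t * hchordX

theorem wood_projection_direct_similarity_general
    (J X Y Z A' B' C' O O' : ℂ) (r r' : ℝ)
    (hJ : J ∈ Metric.sphere O r) (hJ' : J ∈ Metric.sphere O' r')
    (hXmem : X ∈ Metric.sphere O' r') (hYmem : Y ∈ Metric.sphere O' r')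
    (hZmem : Z ∈ Metric.sphere O' r')
    (hXJ : X ≠ J) (hYJ : Y ≠ J) (hZJ : Z ≠ J)
    (hA' : A' ∈ Metric.sphere O r) (hA'line : A' ∈ affineSpan ℝ ({J, X} : Set ℂ)) (hA'ne : A' ≠ J)
    (hB' : B' ∈ Metric.sphere O r) (hB'line : B' ∈ affineSpan ℝ ({J, Y} : Set ℂ)) (hB'ne : B' ≠ J)
    (hC' : C' ∈ Metric.sphere O r) (hC'line : C' ∈ affineSpan ℝ ({J, Z} : Set ℂ)) (hC'ne : C' ≠ J) :
    ∃ γ δ : ℂ, γ ≠ 0 ∧ γ * X + δ = A' ∧ γ * Y + δ = B' ∧ γ * Z + δ = C' := by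
  set γ := conj (J - O) / conj (J - O')
  have hγ : γ ≠ 0 := by
    refine div_ne_zero ?_ ?_ <;> rw [map_ne_zero, sub_ne_zero]
    exacts [ne_center_of_mem_sphere hJ hA' hA'ne, ne_center_of_mem_sphere hJ' hXmem hXJ]
  have image_eq {W P : ℂ} (hW : W ∈ sphere O' r') (hWJ : W ≠ J) (hP : P ∈ sphere O r)
      (hPline : P ∈ line[ℝ, J, W]) (hPJ : P ≠ J) : γ * W + (O - γ * O') = P := by
    rw [Complex.eq_center_add_of_mem_sphere_of_mem_line hJ hJ' hW hWJ hP hPline hPJ]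
    ring
  exact ⟨γ, O - γ * O', hγ, image_eq hXmem hXJ hA' hA'line hA'ne,
    image_eq hYmem hYJ hB' hB'line hB'ne, image_eq hZmem hZJ hC' hC'line hC'ne⟩

/-- Wood's theorem: if a circle Σ meets the circumcircle of ABC at J, and
X, Y, Z ∈ Σ project from J to A′, B′, C′ on the circumcircle, then A′B′C′ is
directly similar to XYZ. -/
theorem wood_projection_direct_similarity
    (A B C J X Y Z A' B' C' O O' : ℂ) (r r' : ℝ)
    (hnd : AffineIndependent ℝ ![A, B, C])
    (hr : 0 < r) (hA : A ∈ Metric.sphere O r) (hB : B ∈ Metric.sphere O r)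
    (hC : C ∈ Metric.sphere O r)
    (hr' : 0 < r') (hdiff : Metric.sphere O r ≠ Metric.sphere O' r')
    (hJ : J ∈ Metric.sphere O r) (hJ' : J ∈ Metric.sphere O' r')
    (hXmem : X ∈ Metric.sphere O' r') (hYmem : Y ∈ Metric.sphere O' r')
    (hZmem : Z ∈ Metric.sphere O' r')
    (hXJ : X ≠ J) (hYJ : Y ≠ J) (hZJ : Z ≠ J)
    (hXY : X ≠ Y) (hYZ : Y ≠ Z) (hXZ : X ≠ Z)
    (hA' : A' ∈ Metric.sphere O r) (hA'line : A' ∈ affineSpan ℝ ({J, X} : Set ℂ)) (hA'ne : A' ≠ J)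
    (hB' : B' ∈ Metric.sphere O r) (hB'line : B' ∈ affineSpan ℝ ({J, Y} : Set ℂ)) (hB'ne : B' ≠ J)
    (hC' : C' ∈ Metric.sphere O r) (hC'line : C' ∈ affineSpan ℝ ({J, Z} : Set ℂ)) (hC'ne : C' ≠ J) :
    ∃ γ δ : ℂ, γ ≠ 0 ∧ γ * X + δ = A' ∧ γ * Y + δ = B' ∧ γ * Z + δ = C' :=
  wood_projection_direct_similarity_general J X Y Z A' B' C' O O' r r' hJ hJ' hXmem hYmem hZmem hXJ
    hYJ hZJ hA' hA'line hA'ne hB' hB'line hB'ne hC' hC'line hC'ne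
end
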